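/- arXiv:1606.07380 — 2 statements merged into one kernel-verified Lean document; each statement's English description precedes it below -/
import Mathlib

section
/- Let n ≥ 1, let X ⊆ {0,1}ⁿ be finite and nonempty, let ĉ ∈ ℝⁿ with ĉ ≥ 0 componentwise, and let d ∈ ℝⁿ with dᵢ > 0 for all i. Define F : X → ℝ² by F(x) = (ĉᵀx, maxᵢ dᵢxᵢ), and let V = conv(F(X)) + ℝ²₊. Then the number of extreme points of V is at most n. -/
/-!
Every point of `V = conv S + ℝ²₊` dominates a point of `conv S`, and an extreme point `a` of an
upward closed set is minimal in it: if `b ≤ a` lies in the set, then `a` is the midpoint of `b`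
and `a + (a - b)`. Hence the extreme points of `V` lie in `S = F(X)` and form an antichain, so
they have pairwise distinct second coordinates. If `0 ∈ X` then `F 0 = 0` lies below all of
`V`, which has `0` as its only extreme point. Otherwise every `x ∈ X` has a coordinate equal to
`1`, so `maxᵢ dᵢxᵢ` is attained at such a coordinate and equals some `dᵢ`: there are at most `n`
second coordinates.
-/

open Pointwise

section OrderedModule

variable {E : Type*} [AddCommGroup E] [PartialOrder E] [IsOrderedAddMonoid E] {s : Set E}

lemma add_mem_add_nonneg {v w : E} (hv : v ∈ s + {u : E | 0 ≤ u}) (hw : 0 ≤ w) :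
    v + w ∈ s + {u : E | 0 ≤ u} := by
  obtain ⟨p, hp, c, hc, rfl⟩ := hv
  exact ⟨p, hp, c + w, add_nonneg hc hw, (add_assoc _ _ _).symm⟩

variable [Module ℝ E]

lemma eq_of_le_of_mem_extremePoints_add_nonneg {a b : E}
    (ha : a ∈ (s + {u : E | 0 ≤ u}).extremePoints ℝ) (hb : b ∈ s + {u : E | 0 ≤ u})
    (hba : b ≤ a) : b = a := by
  have hup : a + (a - b) ∈ s + {u : E | 0 ≤ u} := add_mem_add_nonneg ha.1 (sub_nonneg.2 hba)
  have hmid : a ∈ openSegment ℝ b (a + (a - b)) :=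
    ⟨1 / 2, 1 / 2, by norm_num, by norm_num, by norm_num, by module⟩
  exact ha.2 hb hup hmid

lemma extremePoints_convexHull_add_nonneg_subset :
    (convexHull ℝ s + {u : E | 0 ≤ u}).extremePoints ℝ ⊆ s := by
  intro e he
  have hsub : convexHull ℝ s ⊆ convexHull ℝ s + {u : E | 0 ≤ u} := fun p hp =>
    ⟨p, hp, 0, le_rfl, add_zero p⟩
  obtain ⟨p, hp, c, hc, hpc⟩ := he.1
  have hpe : p = e := eq_of_le_of_mem_extremePoints_add_nonneg he (hsub hp)
    (hpc ▸ le_add_of_nonneg_right hc)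
  subst hpe
  exact extremePoints_convexHull_subset
    (inter_extremePoints_subset_extremePoints_of_subset hsub ⟨hp, he⟩)

lemma extremePoints_convexHull_add_nonneg_subset_zero (hs : ∀ x ∈ s, 0 ≤ x) (h0 : 0 ∈ s) :
    (convexHull ℝ s + {u : E | 0 ≤ u}).extremePoints ℝ ⊆ {0} := fun e he =>
  (eq_of_le_of_mem_extremePoints_add_nonneg he
    ⟨0, subset_convexHull ℝ s h0, 0, le_rfl, add_zero 0⟩
    (hs e (extremePoints_convexHull_add_nonneg_subset he))).symm

end OrderedModule

lemma injOn_apply_one_extremePoints_add_nonneg (s : Set (Fin 2 → ℝ)) :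
    Set.InjOn (fun v => v 1) ((s + {u : Fin 2 → ℝ | 0 ≤ u}).extremePoints ℝ) := by
  intro a ha b hb (h1 : a 1 = b 1)
  rcases le_total (a 0) (b 0) with h0 | h0
  · exact eq_of_le_of_mem_extremePoints_add_nonneg hb ha.1 (Fin.forall_fin_two.2 ⟨h0, h1.le⟩)
  · exact (eq_of_le_of_mem_extremePoints_add_nonneg ha hb.1
      (Fin.forall_fin_two.2 ⟨h0, h1.ge⟩)).symm

lemma ciSup_mul_mem_range {ι : Type*} [Finite ι] {d x : ι → ℝ} (hd : ∀ i, 0 < d i)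
    (hx : ∀ i, x i = 0 ∨ x i = 1) (hx0 : x ≠ 0) : ⨆ i, d i * x i ∈ Set.range d := by
  obtain ⟨i₀, hi₀⟩ := Function.ne_iff.1 hx0
  have : Nonempty ι := ⟨i₀⟩
  obtain ⟨j, hj⟩ := exists_eq_ciSup_of_finite (f := fun i => d i * x i)
  have hpos : 0 < d j * x j := by
    calc 0 < d i₀ * x i₀ := by simp [(hx i₀).resolve_left hi₀, hd i₀]
      _ ≤ ⨆ i, d i * x i := le_ciSup (f := fun i => d i * x i) (Set.finite_range _).bddAbove i₀
      _ = d j * x j := hj.symm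
  have hxj : x j = 1 := (hx j).resolve_left fun h => by simp [h] at hpos
  exact ⟨j, by rw [← hj, hxj, mul_one]⟩

theorem generalized_manhattan_extreme_points_le_n_general
    {n : ℕ} (hn : 1 ≤ n) (X : Finset (Fin n → ℝ))
    (hX01 : ∀ x ∈ X, ∀ i, x i = 0 ∨ x i = 1)
    (chat : Fin n → ℝ) (hchat : ∀ i, 0 ≤ chat i)
    (d : Fin n → ℝ) (hd : ∀ i, 0 < d i) :
    ((convexHull ℝ
        ((fun x => ![∑ i, chat i * x i, ⨆ i, d i * x i]) '' (X : Set (Fin n → ℝ))) +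
      {v : Fin 2 → ℝ | 0 ≤ v}).extremePoints ℝ).ncard ≤ n := by
  set F : (Fin n → ℝ) → Fin 2 → ℝ := fun x => ![∑ i, chat i * x i, ⨆ i, d i * x i]
  set E := (convexHull ℝ (F '' X) + {v : Fin 2 → ℝ | 0 ≤ v}).extremePoints ℝ
  by_cases h0 : (0 : Fin n → ℝ) ∈ X
  · have hx_nonneg : ∀ x ∈ X, ∀ i, 0 ≤ x i := fun x hx i => by
      rcases hX01 x hx i with h | h <;> simp [h]
    have hF_nonneg : ∀ v ∈ F '' X, 0 ≤ v := by
      rintro _ ⟨x, hx, rfl⟩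
      refine Fin.forall_fin_two.2 ⟨?_, ?_⟩ <;> simp only [F, Pi.zero_apply, Matrix.cons_val]
      · exact Finset.sum_nonneg fun i _ => mul_nonneg (hchat i) (hx_nonneg x hx i)
      · exact Real.iSup_nonneg fun i => mul_nonneg (hd i).le (hx_nonneg x hx i)
    have hE : E ⊆ {0} := extremePoints_convexHull_add_nonneg_subset_zero hF_nonneg
      ⟨0, h0, by ext i; fin_cases i <;> simp [F]⟩
    calc E.ncard ≤ ({0} : Set (Fin 2 → ℝ)).ncard := Set.ncard_le_ncard hE
      _ = 1 := Set.ncard_singleton 0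
      _ ≤ n := hn
  · have hrange : (fun v => v 1) '' E ⊆ Set.range d := by
      rintro _ ⟨_, he, rfl⟩
      obtain ⟨x, hx, rfl⟩ := extremePoints_convexHull_add_nonneg_subset he
      exact ciSup_mul_mem_range hd (hX01 x hx) (ne_of_mem_of_not_mem hx h0)
    calc E.ncard = ((fun v => v 1) '' E).ncard :=
          ((injOn_apply_one_extremePoints_add_nonneg _).ncard_image).symm
      _ ≤ (Set.range d).ncard := Set.ncard_le_ncard hrange (Set.finite_range d)
      _ ≤ n := by simpa using Set.ncard_image_le (f := d) (s := Set.univ)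

/-- for `X ⊆ {0,1}ⁿ`, `ĉ ≥ 0`, `d > 0`, and `F(x) = (ĉᵀx, maxᵢ dᵢxᵢ)`
(the bicriteria problem arising from the generalized Manhattan norm), the set
`V = conv(F(X)) + ℝ²₊` has at most `n` extreme points. -/
theorem generalized_manhattan_extreme_points_le_n
    {n : ℕ} (hn : 1 ≤ n) (X : Finset (Fin n → ℝ)) (hXne : X.Nonempty)
    (hX01 : ∀ x ∈ X, ∀ i, x i = 0 ∨ x i = 1)
    (chat : Fin n → ℝ) (hchat : ∀ i, 0 ≤ chat i)
    (d : Fin n → ℝ) (hd : ∀ i, 0 < d i) :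
    ((convexHull ℝ
        ((fun x => ![∑ i, chat i * x i, ⨆ i, d i * x i]) '' (X : Set (Fin n → ℝ))) +
      {v : Fin 2 → ℝ | 0 ≤ v}).extremePoints ℝ).ncard ≤ n :=
  generalized_manhattan_extreme_points_le_n_general hn X hX01 chat hchat d hd
end

section
/- Consider the unconstrained problem X = {0,1}ⁿ with nominal costs ĉ ∈ ℝⁿ and nominal solution x̂ defined by x̂ᵢ = 1 iff ĉᵢ ≤ 0. Consider all deviation pairs (d⁺,d⁻) with d⁺, d⁻ ≥ 0 satisfying dᵢ⁻ = 0 whenever x̂ᵢ = 1 and dᵢ⁺ = 0 whenever x̂ᵢ = 0 (costs may only increase on coefficients chosen by x̂ and only decrease on the others, with no further bounds). Then the greatest element of the set of sizes { Σᵢ (dᵢ⁺ + dᵢ⁻) : x̂ minimizes the regret over {0,1}ⁿ with respect to U(d⁺,d⁻) } equals Σᵢ 2|ĉᵢ|, attained by dᵢ⁺ = −2ĉᵢ when ĉᵢ ≤ 0 and dᵢ⁻ = 2ĉᵢ when ĉᵢ > 0. -/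
/-! Objective and uncertainty box are both separable, so the regret of `x ∈ {0,1}ⁿ` is a sum of
coordinate terms: `max (ĉᵢ + dᵢ⁺) 0` if `xᵢ = 1` (worst case `cᵢ = ĉᵢ + dᵢ⁺`) and
`max (dᵢ⁻ - ĉᵢ) 0` if `xᵢ = 0` (worst case `cᵢ = ĉᵢ - dᵢ⁻`). If `x̂` is regret-optimal, comparing
it with `x̂` flipped at `i` and using the one-sidedness of the deviations gives `dᵢ⁺ ≤ -2ĉᵢ` when
`ĉᵢ ≤ 0` and `dᵢ⁻ ≤ 2ĉᵢ` otherwise. For the extremal pair both coordinate terms equal `|ĉᵢ|`, so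
every `x` has regret `Σᵢ |ĉᵢ|` and `x̂` is optimal. -/

/-- The binary cube `{0,1}ⁿ`, feasible set of the unconstrained combinatorial problem. -/
def binaryCube (n : ℕ) : Set (Fin n → ℝ) := {y | ∀ i, y i = 0 ∨ y i = 1}

/-- The min-max regret of `x` for the unconstrained combinatorial problem with general
interval uncertainty set `U(d⁺,d⁻) = {c : ĉᵢ − dᵢ⁻ ≤ cᵢ ≤ ĉᵢ + dᵢ⁺}`:
`reg(x) = max_{c∈U(d⁺,d⁻)} ( cᵀx − min_{y∈{0,1}ⁿ} cᵀy )`. -/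
noncomputable def ucRegret {n : ℕ} (chat dp dm : Fin n → ℝ) (x : Fin n → ℝ) : ℝ :=
  sSup ((fun c : Fin n → ℝ =>
      (∑ i, c i * x i) - sInf ((fun y => ∑ i, c i * y i) '' binaryCube n)) ''
    {c : Fin n → ℝ | ∀ i, chat i - dm i ≤ c i ∧ c i ≤ chat i + dp i})

open Finset Function

theorem le_of_sum_le_sum_update {ι α M : Type*} [Fintype ι] [DecidableEq ι] [AddCommMonoid M]
    [PartialOrder M] [IsOrderedCancelAddMonoid M] {g : ι → α → M} {x : ι → α} {i : ι} {b : α}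
    (h : ∑ j, g j (x j) ≤ ∑ j, g j (update x i b j)) : g i (x i) ≤ g i b := by
  rwa [sum_congr rfl fun j _ => apply_update g x i b j, sum_update_of_mem (mem_univ i),
    sum_eq_add_sum_sdiff_singleton_of_mem (mem_univ i), add_le_add_iff_right] at h

theorem isGreatest_sum_image_univ_pi {ι α M : Type*} [Fintype ι] [AddCommMonoid M]
    [PartialOrder M] [IsOrderedAddMonoid M] {f : ι → α → M} {s : ι → Set α} {m : ι → M}
    (h : ∀ i, IsGreatest (f i '' s i) (m i)) :
    IsGreatest ((fun c => ∑ i, f i (c i)) '' Set.univ.pi s) (∑ i, m i) := by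
  choose c hc hcm using fun i => (h i).1
  refine ⟨⟨c, fun i _ => hc i, sum_congr rfl fun i _ => hcm i⟩, ?_⟩
  rintro _ ⟨d, hd, rfl⟩
  exact sum_le_sum fun i _ => (h i).2 ⟨d i, hd i (Set.mem_univ i), rfl⟩

theorem update_mem_binaryCube {n : ℕ} {x : Fin n → ℝ} (hx : x ∈ binaryCube n) (i : Fin n)
    {b : ℝ} (hb : b = 0 ∨ b = 1) : update x i b ∈ binaryCube n := by
  intro j
  rcases eq_or_ne j i with rfl | hj
  · simpa using hb
  · simpa [hj] using hx j

theorem one_sub_eq_zero_or_eq_one {b : ℝ} (hb : b = 0 ∨ b = 1) : 1 - b = 0 ∨ 1 - b = 1 := by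
  rcases hb with rfl | rfl <;> norm_num

theorem min_zero_le_mul {b : ℝ} (hb : b = 0 ∨ b = 1) (c : ℝ) : min c 0 ≤ c * b := by
  rcases hb with rfl | rfl <;> simp

theorem sInf_image_binaryCube {n : ℕ} (c : Fin n → ℝ) :
    sInf ((fun y => ∑ i, c i * y i) '' binaryCube n) = ∑ i, min (c i) 0 := by
  refine IsLeast.csInf_eq ⟨⟨fun i => if c i ≤ 0 then 1 else 0, ?_, ?_⟩, ?_⟩
  · intro i
    by_cases h : c i ≤ 0 <;> simp [h]
  · refine sum_congr rfl fun i _ => ?_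
    by_cases h : c i ≤ 0
    · simp [h]
    · simp [h, (not_le.1 h).le]
  · rintro _ ⟨y, hy, rfl⟩
    exact sum_le_sum fun i _ => min_zero_le_mul (hy i) (c i)

/-- The worst case, over `c ∈ [l, u]`, of the contribution `c b - min c 0` of a coordinate with
`xᵢ = b` to the regret. -/
noncomputable def coordRegret (l u b : ℝ) : ℝ := if b = 1 then max u 0 else max (-l) 0

theorem isGreatest_coordRegret {l u b : ℝ} (hb : b = 0 ∨ b = 1) (hlu : l ≤ u) :
    IsGreatest ((fun c => c * b - min c 0) '' Set.Icc l u) (coordRegret l u b) := by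
  rcases hb with rfl | rfl
  · refine ⟨⟨l, ⟨le_rfl, hlu⟩, ?_⟩, ?_⟩
    · rcases le_total l 0 with h | h <;> simp [coordRegret, h]
    · rintro _ ⟨c, ⟨hlc, -⟩, rfl⟩
      rcases le_total c 0 with h | h <;> simp [coordRegret, h, hlc]
  · refine ⟨⟨u, ⟨hlu, le_rfl⟩, ?_⟩, ?_⟩
    · rcases le_total u 0 with h | h <;> simp [coordRegret, h]
    · rintro _ ⟨c, ⟨-, hcu⟩, rfl⟩
      rcases le_total c 0 with h | h <;> simp [coordRegret, h, hcu]

theorem ucRegret_eq_sum_coordRegret {n : ℕ} {chat dp dm x : Fin n → ℝ}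
    (hU : ∀ i, chat i - dm i ≤ chat i + dp i) (hx : x ∈ binaryCube n) :
    ucRegret chat dp dm x = ∑ i, coordRegret (chat i - dm i) (chat i + dp i) (x i) := by
  have hbox : {c : Fin n → ℝ | ∀ i, chat i - dm i ≤ c i ∧ c i ≤ chat i + dp i} =
      Set.univ.pi fun i => Set.Icc (chat i - dm i) (chat i + dp i) := by
    ext c
    simp only [Set.mem_ofPred_eq, Set.mem_pi, Set.mem_univ, true_implies, Set.mem_Icc]
  have hobj : (fun c : Fin n → ℝ =>
      (∑ i, c i * x i) - sInf ((fun y => ∑ i, c i * y i) '' binaryCube n)) =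
      fun c => ∑ i, (c i * x i - min (c i) 0) := by
    funext c
    rw [sInf_image_binaryCube, sum_sub_distrib]
  rw [ucRegret, hbox, hobj]
  exact (isGreatest_sum_image_univ_pi fun i => isGreatest_coordRegret (hx i) (hU i)).csSup_eq

theorem coordRegret_le_of_forall_ucRegret_le {n : ℕ} {chat dp dm x : Fin n → ℝ}
    (hU : ∀ i, chat i - dm i ≤ chat i + dp i) (hx : x ∈ binaryCube n)
    (hmin : ∀ y ∈ binaryCube n, ucRegret chat dp dm x ≤ ucRegret chat dp dm y) (i : Fin n) :
    coordRegret (chat i - dm i) (chat i + dp i) (x i) ≤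
      coordRegret (chat i - dm i) (chat i + dp i) (1 - x i) := by
  have hflip := update_mem_binaryCube hx i (one_sub_eq_zero_or_eq_one (hx i))
  have h := hmin _ hflip
  rw [ucRegret_eq_sum_coordRegret hU hx, ucRegret_eq_sum_coordRegret hU hflip] at h
  exact le_of_sum_le_sum_update (g := fun j => coordRegret (chat j - dm j) (chat j + dp j)) h

theorem coordRegret_two_abs_deviation (c b : ℝ) :
    coordRegret (c - if c ≤ 0 then 0 else 2 * c) (c + if c ≤ 0 then -2 * c else 0) b = |c| := by
  by_cases h : c ≤ 0
  · simp [coordRegret, h, abs_of_nonpos h, (by ring : c + -(2 * c) = -c)]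
  · have hc : 0 < c := not_le.1 h
    simp [coordRegret, h, hc.le, abs_of_pos hc, (by ring : 2 * c - c = c)]

theorem add_le_two_mul_abs_of_coordRegret_le {c p m : ℝ} (hm : c ≤ 0 → m = 0)
    (hp : ¬ c ≤ 0 → p = 0)
    (h : coordRegret (c - m) (c + p) (if c ≤ 0 then 1 else 0) ≤
      coordRegret (c - m) (c + p) (1 - if c ≤ 0 then 1 else 0)) :
    p + m ≤ 2 * |c| := by
  by_cases hc : c ≤ 0
  · simp [coordRegret, hc, hm hc] at h ⊢
    linarith [abs_of_nonpos hc]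
  · simp [coordRegret, hc, hp hc] at h ⊢
    rcases h with ⟨h, -⟩ | h <;> linarith [abs_of_pos (not_le.1 hc)]

theorem ucRegret_two_abs_deviation {n : ℕ} (chat : Fin n → ℝ) {x : Fin n → ℝ}
    (hx : x ∈ binaryCube n) :
    ucRegret chat (fun i => if chat i ≤ 0 then -2 * chat i else 0)
      (fun i => if chat i ≤ 0 then 0 else 2 * chat i) x = ∑ i, |chat i| := by
  rw [ucRegret_eq_sum_coordRegret (fun i => ?_) hx]
  · exact sum_congr rfl fun i _ => coordRegret_two_abs_deviation _ _
  · split_ifs <;> linarith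

theorem sum_two_abs_deviation {n : ℕ} (chat : Fin n → ℝ) :
    ∑ i, ((if chat i ≤ 0 then -2 * chat i else 0) + (if chat i ≤ 0 then 0 else 2 * chat i)) =
      ∑ i, 2 * |chat i| :=
  sum_congr rfl fun i _ => by
    split_ifs with h
    · rw [abs_of_nonpos h]; ring
    · rw [abs_of_pos (not_le.1 h)]; ring

/-- Corollary: for the unconstrained problem with nominal solution `x̂`
(`x̂ᵢ = 1` iff `ĉᵢ ≤ 0`), among deviation pairs `(d⁺,d⁻) ≥ 0` with `dᵢ⁻ = 0` whenever
`x̂ᵢ = 1` and `dᵢ⁺ = 0` whenever `x̂ᵢ = 0`, the greatest achievable uncertainty size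
`Σᵢ (dᵢ⁺ + dᵢ⁻)` keeping `x̂` regret-optimal equals `Σᵢ 2|ĉᵢ|`, attained by
`dᵢ⁺ = −2ĉᵢ` when `ĉᵢ ≤ 0` and `dᵢ⁻ = 2ĉᵢ` when `ĉᵢ > 0`. -/
theorem largest_one_sided_uncertainty_size
    {n : ℕ} (chat : Fin n → ℝ) :
    IsGreatest
      {s : ℝ | ∃ dp dm : Fin n → ℝ,
        (∀ i, 0 ≤ dp i) ∧ (∀ i, 0 ≤ dm i) ∧
        (∀ i, chat i ≤ 0 → dm i = 0) ∧ (∀ i, ¬ chat i ≤ 0 → dp i = 0) ∧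
        (∀ x ∈ binaryCube n,
          ucRegret chat dp dm (fun i => if chat i ≤ 0 then (1 : ℝ) else 0) ≤
            ucRegret chat dp dm x) ∧
        s = ∑ i, (dp i + dm i)}
      (∑ i, 2 * |chat i|) ∧
    ((∀ x ∈ binaryCube n,
        ucRegret chat
          (fun i => if chat i ≤ 0 then -2 * chat i else 0)
          (fun i => if chat i ≤ 0 then 0 else 2 * chat i)
          (fun i => if chat i ≤ 0 then (1 : ℝ) else 0) ≤
        ucRegret chat
          (fun i => if chat i ≤ 0 then -2 * chat i else 0)
          (fun i => if chat i ≤ 0 then 0 else 2 * chat i) x) ∧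
      (∑ i, ((if chat i ≤ 0 then -2 * chat i else 0) +
        (if chat i ≤ 0 then 0 else 2 * chat i))) = ∑ i, 2 * |chat i|) := by
  set xhat : Fin n → ℝ := fun i => if chat i ≤ 0 then 1 else 0
  have hxhat : xhat ∈ binaryCube n := fun i => by by_cases h : chat i ≤ 0 <;> simp [xhat, h]
  have hopt : ∀ x ∈ binaryCube n,
      ucRegret chat (fun i => if chat i ≤ 0 then -2 * chat i else 0)
        (fun i => if chat i ≤ 0 then 0 else 2 * chat i) xhat ≤
      ucRegret chat (fun i => if chat i ≤ 0 then -2 * chat i else 0)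
        (fun i => if chat i ≤ 0 then 0 else 2 * chat i) x := fun x hx => by
    rw [ucRegret_two_abs_deviation chat hx, ucRegret_two_abs_deviation chat hxhat]
  refine ⟨⟨⟨_, _, fun i => ?_, fun i => ?_, fun i h => if_pos h, fun i h => if_neg h, hopt,
    (sum_two_abs_deviation chat).symm⟩, ?_⟩, hopt, sum_two_abs_deviation chat⟩
  · split_ifs <;> linarith
  · split_ifs <;> linarith
  rintro s ⟨dp, dm, hdp, hdm, hdm_zero, hdp_zero, hmin, rfl⟩
  have hU : ∀ i, chat i - dm i ≤ chat i + dp i := fun i => by linarith [hdp i, hdm i]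
  exact sum_le_sum fun i _ => add_le_two_mul_abs_of_coordRegret_le (hdm_zero i) (hdp_zero i)
    (coordRegret_le_of_forall_ucRegret_le hU hxhat hmin i)
end
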